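/- arXiv:2106.01106 — 4 statements merged into one kernel-verified Lean document; each statement's English description precedes it below -/
import Mathlib

section
/- Let $t_0 \in \mathbb{R}$, let $\mathcal{A} : [t_0, \infty) \to \mathbb{R}$ be a $C^1$ bounded function, and let $\xi : [t_0, \infty) \to [0, \infty)$ be continuous and integrable. If there exists $\rho > 0$ such that for all $t \ge t_0$, $|\mathcal{A}'(t) + \rho \mathcal{A}(t)| \le \xi(t) \cdot \sup_{t' \ge t} |\mathcal{A}(t')|$, then there exists $c > 0$ such that for all $t \ge t_0$, $|\mathcal{A}(t)| \le c e^{-\rho t}$. -/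
open Real Set MeasureTheory

/-! Multiplying by `exp (ρ t)` turns the hypothesis into
`|(e^{ρt} A)'| ≤ ξ(t) e^{ρt} sup_{t' ≥ t} |A t'|`. Once the tail `∫_T^∞ ξ` is at most `1/2`,
integrating this from `s ≥ T` shows that `A` can never exceed `|A s|` plus half its tail
supremum, so `sup_{t' ≥ s} |A t'| ≤ 2 |A s|`. From then on the perturbation is controlled by `A`
itself, `|(e^{ρt} A)'| ≤ 2 ξ(t) |e^{ρt} A|`, and Grönwall's inequality with the integrable
coefficient `2 ξ` keeps `e^{ρt} A` bounded. -/

theorem exists_forall_abs_intervalIntegral_le {ξ : ℝ → ℝ} {a ε : ℝ}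
    (hξ : IntegrableOn ξ (Ioi a)) (hε : 0 < ε) : ∃ T ≥ a, ∀ s ≥ T, ∀ v ≥ T, |∫ u in s..v, ξ u| ≤ ε := by
  obtain ⟨T, hT⟩ := Metric.tendsto_atTop.1
    (intervalIntegral_tendsto_integral_Ioi a hξ Filter.tendsto_id) (ε / 2) (half_pos hε)
  simp only [id] at hT
  have hint : ∀ x ≥ a, IntervalIntegrable ξ volume a x := fun x hx =>
    (intervalIntegrable_iff_integrableOn_Ioc_of_le hx).2 (hξ.mono_set Ioc_subset_Ioi_self)
  refine ⟨max T a, le_max_right _ _, fun s hs v hv => ?_⟩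
  rw [← intervalIntegral.integral_interval_sub_left (hint v (le_of_max_le_right hv))
    (hint s (le_of_max_le_right hs))]
  have hs' := abs_lt.1 (hT s (le_of_max_le_left hs))
  have hv' := abs_lt.1 (hT v (le_of_max_le_left hv))
  exact abs_le.2 ⟨by linarith, by linarith⟩

theorem abs_sub_le_integral_of_abs_deriv_le {g g' φ : ℝ → ℝ} {a b : ℝ} (hab : a ≤ b)
    (hg : ContinuousOn g (Icc a b)) (hg' : ∀ x ∈ Ioo a b, HasDerivAt g (g' x) x)
    (hφ : IntegrableOn φ (Icc a b)) (hle : ∀ x ∈ Ioo a b, |g' x| ≤ φ x) :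
    |g b - g a| ≤ ∫ x in a..b, φ x := by
  have hderiv : ∀ x ∈ Ioo a b, HasDerivWithinAt g (g' x) (Ioi x) x := fun x hx =>
    (hg' x hx).hasDerivWithinAt
  have hlower := intervalIntegral.integral_le_sub_of_hasDeriv_right_of_le hab hg hderiv hφ.neg
    fun x hx => neg_le_of_abs_le (hle x hx)
  have hupper := intervalIntegral.sub_le_integral_of_hasDeriv_right_of_le hab hg hderiv hφ
    fun x hx => le_of_abs_le (hle x hx)
  simp only [Pi.neg_apply, intervalIntegral.integral_neg] at hlower
  exact abs_le.2 ⟨by linarith, hupper⟩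

theorem abs_le_mul_exp_integral_of_abs_deriv_le {f f' ξ : ℝ → ℝ} {a b : ℝ} (hab : a ≤ b)
    (hf : ContinuousOn f (Icc a b)) (hf' : ∀ t ∈ Ioo a b, HasDerivAt f (f' t) t)
    (hξ : ContinuousOn ξ (Icc a b)) (hle : ∀ t ∈ Ioo a b, |f' t| ≤ ξ t * |f t|) :
    |f b| ≤ |f a| * exp (∫ t in a..b, ξ t) := by
  set J : ℝ → ℝ := fun x => ∫ t in a..x, ξ t with hJdef
  have hξi : IntervalIntegrable ξ volume a b := hξ.intervalIntegrable_of_Icc hab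
  have hJ : ContinuousOn J (Icc a b) := by
    simpa only [uIcc_of_le hab] using
      intervalIntegral.continuousOn_primitive_interval' hξi left_mem_uIcc
  have hJ' : ∀ t ∈ Ioo a b, HasDerivAt J (ξ t) t := fun t ht =>
    intervalIntegral.integral_hasDerivAt_right
      ((hξ.mono (Icc_subset_Icc_right ht.2.le)).intervalIntegrable_of_Icc ht.1.le)
      ⟨Icc a b, Icc_mem_nhds ht.1 ht.2, hξ.aestronglyMeasurable measurableSet_Icc⟩
      (hξ.continuousAt (Icc_mem_nhds ht.1 ht.2))
  -- `(f e^{-J})²` is a Lyapunov function: its derivative is `2 e^{-2J} (f f' - ξ f²) ≤ 0`.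
  have hanti : AntitoneOn (fun x => (f x * exp (-J x)) ^ 2) (Icc a b) := by
    refine antitoneOn_of_hasDerivWithinAt_nonpos (convex_Icc a b)
      ((hf.mul (hJ.neg.rexp)).pow 2)
      (f' := fun t => 2 * exp (-J t) ^ 2 * (f t * f' t - ξ t * f t ^ 2)) ?_ ?_
    all_goals rw [interior_Icc]; intro t ht
    · refine ((((hf' t ht).fun_mul (hJ' t ht).fun_neg.exp).fun_pow 2).congr_deriv ?_
        ).hasDerivWithinAt
      norm_num
      ring
    · have hff' : f t * f' t ≤ ξ t * f t ^ 2 := calc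
        f t * f' t ≤ |f t| * |f' t| := by rw [← abs_mul]; exact le_abs_self _
        _ ≤ |f t| * (ξ t * |f t|) := mul_le_mul_of_nonneg_left (hle t ht) (abs_nonneg _)
        _ = ξ t * f t ^ 2 := by rw [← sq_abs (f t)]; ring
      exact mul_nonpos_of_nonneg_of_nonpos (by positivity) (by linarith)
  have hba := sq_le_sq.1 (hanti (left_mem_Icc.2 hab) (right_mem_Icc.2 hab) hab)
  simp only [hJdef, intervalIntegral.integral_same, neg_zero, exp_zero, mul_one, abs_mul,
    exp_neg, abs_inv, abs_exp] at hba
  rwa [← div_eq_mul_inv, div_le_iff₀ (exp_pos _)] at hba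

theorem hasDerivAt_exp_const_mul_mul {A : ℝ → ℝ} {a ρ t : ℝ} (hA : HasDerivAt A a t) :
    HasDerivAt (fun u => exp (ρ * u) * A u) (exp (ρ * t) * (a + ρ * A t)) t := by
  have hexp : HasDerivAt (fun u => exp (ρ * u)) (exp (ρ * t) * ρ) t := by
    simpa using ((hasDerivAt_id t).const_mul ρ).exp
  exact (hexp.fun_mul hA).congr_deriv (by ring)

theorem exp_mul_abs_le_of_abs_deriv_add_le {A A' ξ : ℝ → ℝ} {ρ T t : ℝ} (hTt : T ≤ t)
    (hA : ∀ u ∈ Icc T t, HasDerivAt A (A' u) u) (hξ : ContinuousOn ξ (Icc T t))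
    (h : ∀ u ∈ Icc T t, |A' u + ρ * A u| ≤ ξ u * |A u|) :
    exp (ρ * t) * |A t| ≤ exp (ρ * T) * |A T| * exp (∫ u in T..t, ξ u) := by
  have hgr := abs_le_mul_exp_integral_of_abs_deriv_le hTt
    (fun u hu => (hasDerivAt_exp_const_mul_mul (hA u hu)).continuousAt.continuousWithinAt)
    (fun u hu => hasDerivAt_exp_const_mul_mul (ρ := ρ) (hA u (Ioo_subset_Icc_self hu))) hξ
    fun u hu => by
      rw [abs_mul, abs_mul, abs_exp, mul_left_comm]
      exact mul_le_mul_of_nonneg_left (h u (Ioo_subset_Icc_self hu)) (exp_pos _).le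
  simpa only [abs_mul, abs_exp] using hgr

noncomputable def tailSup (A : ℝ → ℝ) (t : ℝ) : ℝ := sSup ((fun t' => |A t'|) '' Ici t)

section TailSup

variable {A : ℝ → ℝ} {s t : ℝ}

theorem abs_le_tailSup (hA : BddAbove ((fun t' => |A t'|) '' Ici s)) (hst : s ≤ t) :
    |A t| ≤ tailSup A t :=
  le_csSup (hA.mono (image_mono (Ici_subset_Ici.2 hst))) ⟨t, self_mem_Ici, rfl⟩

theorem tailSup_le_tailSup (hA : BddAbove ((fun t' => |A t'|) '' Ici s)) (hst : s ≤ t) :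
    tailSup A t ≤ tailSup A s :=
  csSup_le_csSup hA (nonempty_Ici.image _) (image_mono (Ici_subset_Ici.2 hst))

theorem tailSup_le {C : ℝ} (h : ∀ t ∈ Ici s, |A t| ≤ C) : tailSup A s ≤ C :=
  csSup_le (nonempty_Ici.image _) (forall_mem_image.2 h)

end TailSup

theorem tailSup_le_two_mul_abs {A A' ξ : ℝ → ℝ} {ρ s : ℝ} (hρ : 0 ≤ ρ)
    (hA : ∀ t ∈ Ici s, HasDerivAt A (A' t) t) (hbdd : BddAbove ((fun t => |A t|) '' Ici s))
    (hξ : IntegrableOn ξ (Ici s)) (hξ0 : ∀ t ∈ Ici s, 0 ≤ ξ t)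
    (hsmall : ∀ v ∈ Ici s, ∫ u in s..v, ξ u ≤ 1 / 2)
    (h : ∀ t ∈ Ici s, |A' t + ρ * A t| ≤ ξ t * tailSup A t) :
    tailSup A s ≤ 2 * |A s| := by
  set B := tailSup A s
  suffices hv : ∀ v ∈ Ici s, |A v| ≤ |A s| + B / 2 by linarith [tailSup_le hv]
  intro v hsv
  have hB : 0 ≤ B := (abs_nonneg _).trans (abs_le_tailSup hbdd le_rfl)
  have hIcc : Icc s v ⊆ Ici s := Icc_subset_Ici_self
  have hdiff :
      |exp (ρ * v) * A v - exp (ρ * s) * A s| ≤ ∫ u in s..v, exp (ρ * v) * B * ξ u := by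
    refine abs_sub_le_integral_of_abs_deriv_le hsv
      (fun u hu => (hasDerivAt_exp_const_mul_mul (hA u (hIcc hu))).continuousAt.continuousWithinAt)
      (fun u hu => hasDerivAt_exp_const_mul_mul (hA u (hIcc (Ioo_subset_Icc_self hu))))
      ((hξ.mono_set hIcc).const_mul _) fun u hu => ?_
    have hsu : u ∈ Ici s := hu.1.le
    calc |exp (ρ * u) * (A' u + ρ * A u)| = exp (ρ * u) * |A' u + ρ * A u| := by
          rw [abs_mul, abs_exp]
      _ ≤ exp (ρ * v) * (ξ u * B) := by
          refine mul_le_mul (exp_le_exp.2 (mul_le_mul_of_nonneg_left hu.2.le hρ))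
            ((h u hsu).trans ?_) (abs_nonneg _) (exp_pos _).le
          exact mul_le_mul_of_nonneg_left (tailSup_le_tailSup hbdd hsu) (hξ0 u hsu)
      _ = exp (ρ * v) * B * ξ u := by ring
  rw [intervalIntegral.integral_const_mul] at hdiff
  have hint := mul_le_mul_of_nonneg_left (hsmall v hsv) (mul_nonneg (exp_pos (ρ * v)).le hB)
  have hexp := mul_le_mul_of_nonneg_right (exp_le_exp.2 (mul_le_mul_of_nonneg_left hsv hρ))
    (abs_nonneg (A s))
  have htri := abs_sub_abs_le_abs_sub (exp (ρ * v) * A v) (exp (ρ * s) * A s)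
  rw [abs_mul, abs_mul, abs_exp, abs_exp] at htri
  refine le_of_mul_le_mul_left ?_ (exp_pos (ρ * v))
  linarith

theorem exists_abs_le_mul_exp_of_forall_ge {A : ℝ → ℝ} {ρ t0 T C M : ℝ} (hρ : 0 ≤ ρ)
    (hM : ∀ t ∈ Ici t0, |A t| ≤ M) (hT : ∀ t ≥ T, |A t| ≤ C * exp (-ρ * t)) :
    ∃ c > 0, ∀ t ∈ Ici t0, |A t| ≤ c * exp (-ρ * t) := by
  refine ⟨max (max C (M * exp (ρ * T))) 1, lt_of_lt_of_le one_pos (le_max_right _ _),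
    fun t ht => ?_⟩
  rcases le_or_gt T t with hTt | htT
  · exact (hT t hTt).trans
      (mul_le_mul_of_nonneg_right (le_max_of_le_left (le_max_left _ _)) (exp_pos _).le)
  · calc |A t| ≤ M := hM t ht
      _ ≤ M * exp (ρ * T) * exp (-ρ * t) := by
          rw [mul_assoc, ← exp_add]
          exact le_mul_of_one_le_right ((abs_nonneg _).trans (hM t ht))
            (one_le_exp (by nlinarith))
      _ ≤ _ := mul_le_mul_of_nonneg_right (le_max_of_le_left (le_max_right _ _)) (exp_pos _).le

theorem stmt0_general (t0 : ℝ) (A A' ξ : ℝ → ℝ)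
    (hA : ∀ t ∈ Ici t0, HasDerivAt A (A' t) t)
    (hbdd : ∃ M, ∀ t ∈ Ici t0, |A t| ≤ M)
    (hξc : ContinuousOn ξ (Ici t0))
    (hξ0 : ∀ t ∈ Ici t0, 0 ≤ ξ t)
    (hξint : IntegrableOn ξ (Ici t0))
    (ρ : ℝ) (hρ : 0 < ρ)
    (h : ∀ t ∈ Ici t0, |A' t + ρ * A t| ≤ ξ t * sSup ((fun t' => |A t'|) '' Ici t)) :
    ∃ c > 0, ∀ t ∈ Ici t0, |A t| ≤ c * Real.exp (-ρ * t) := by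
  change ∀ t ∈ Ici t0, |A' t + ρ * A t| ≤ ξ t * tailSup A t at h
  obtain ⟨M, hM⟩ := hbdd
  obtain ⟨T, hTt0, hT⟩ := exists_forall_abs_intervalIntegral_le
    (hξint.mono_set Ioi_subset_Ici_self) (by norm_num : (0 : ℝ) < 1 / 2)
  have hIci : ∀ {s}, T ≤ s → Ici s ⊆ Ici t0 := fun hs => Ici_subset_Ici.2 (hTt0.trans hs)
  have hsup : ∀ s ≥ T, tailSup A s ≤ 2 * |A s| := fun s hs =>
    tailSup_le_two_mul_abs hρ.le (fun t ht => hA t (hIci hs ht))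
      ⟨M, forall_mem_image.2 fun t ht => hM t (hIci hs ht)⟩ (hξint.mono_set (hIci hs))
      (fun t ht => hξ0 t (hIci hs ht))
      (fun v hv => (le_abs_self _).trans (hT s hs v (hs.trans hv)))
      fun t ht => h t (hIci hs ht)
  refine exists_abs_le_mul_exp_of_forall_ge hρ.le hM (T := T) (C := exp (ρ * T) * |A T| * exp 1)
    fun t ht => ?_
  have hIcc : Icc T t ⊆ Ici t0 := Icc_subset_Ici_self.trans (hIci le_rfl)
  have hgr := exp_mul_abs_le_of_abs_deriv_add_le (ρ := ρ) (ξ := fun u => 2 * ξ u) ht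
    (fun u hu => hA u (hIcc hu)) (continuousOn_const.mul (hξc.mono hIcc)) fun u hu => by
      have := mul_le_mul_of_nonneg_left (hsup u hu.1) (hξ0 u (hIcc hu))
      linarith [h u (hIcc hu)]
  have hJ : ∫ u in T..t, 2 * ξ u ≤ 1 := by
    rw [intervalIntegral.integral_const_mul]
    linarith [le_abs_self (∫ u in T..t, ξ u), hT T le_rfl t ht]
  rw [neg_mul, exp_neg, ← div_eq_mul_inv, le_div_iff₀ (exp_pos _), mul_comm]
  exact hgr.trans (mul_le_mul_of_nonneg_left (exp_le_exp.2 hJ) (by positivity))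

theorem stmt0 (t0 : ℝ) (A A' ξ : ℝ → ℝ)
    (hA : ∀ t ∈ Ici t0, HasDerivAt A (A' t) t)
    (hA'c : ContinuousOn A' (Ici t0))
    (hbdd : ∃ M, ∀ t ∈ Ici t0, |A t| ≤ M)
    (hξc : ContinuousOn ξ (Ici t0))
    (hξ0 : ∀ t ∈ Ici t0, 0 ≤ ξ t)
    (hξint : IntegrableOn ξ (Ici t0))
    (ρ : ℝ) (hρ : 0 < ρ)
    (h : ∀ t ∈ Ici t0, |A' t + ρ * A t| ≤ ξ t * sSup ((fun t' => |A t'|) '' Ici t)) :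
    ∃ c > 0, ∀ t ∈ Ici t0, |A t| ≤ c * Real.exp (-ρ * t) :=
  stmt0_general t0 A A' ξ hA hbdd hξc hξ0 hξint ρ hρ h
end

section
/- Let $t_0 \in \mathbb{R}$, $S \ge t_0$, $e_\beta > 0$, $C \ge 0$, and let $y : [t_0, S] \to [0, \infty)$ be continuous. If for all $t \in [t_0, S]$, $y(t) \le C e^{-e_\beta t} + \frac{e_\beta}{10} \int_t^{S} y(s)\,ds$, then there exists a constant $C' \ge 0$ depending only on $C$ and $e_\beta$ (not on $S$ or $t_0$) such that $y(t) \le C' e^{-e_\beta t}$ for all $t \in [t_0, S]$. -/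
/-!
Write `F t = ∫ s in t..S, y s`, so `F' = -y` and `F S = 0`. The hypothesis says
`(e^{k t} F)' = e^{k t} (k F - y) ≥ -C e^{-(b - k) t}`, and integrating this backward from `S`
gives `F t ≤ C / (b - k) · e^{-b t}`. Substituting into the hypothesis once more yields
`y t ≤ C b / (b - k) · e^{-b t}`, which for `k = eβ / 10`, `b = eβ` is `10 C / 9 · e^{-eβ t}`.
-/

open Real Set MeasureTheory

theorem le_div_mul_exp_of_deriv_ge {ψ ψ' : ℝ → ℝ} {t0 S c C : ℝ} (hc : 0 < c) (hC : 0 ≤ C)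
    (hψ : ContinuousOn ψ (Icc t0 S)) (hψ' : ∀ t ∈ Ioo t0 S, HasDerivAt ψ (ψ' t) t)
    (hψ'_ge : ∀ t ∈ Ioo t0 S, -(C * exp (-c * t)) ≤ ψ' t) (hψS : ψ S ≤ 0) :
    ∀ t ∈ Icc t0 S, ψ t ≤ C / c * exp (-c * t) := by
  intro t ht
  have hderiv (s : ℝ) : HasDerivAt (fun s ↦ C / c * exp (-c * s)) (-(C * exp (-c * s))) s := by
    refine (((hasDerivAt_id s).const_mul (-c)).exp.const_mul (C / c)).congr_deriv ?_
    field_simp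
    simp
  have hmono : MonotoneOn (fun s ↦ ψ s - C / c * exp (-c * s)) (Icc t0 S) := by
    refine monotoneOn_of_hasDerivWithinAt_nonneg (f' := fun s ↦ ψ' s + C * exp (-c * s))
      (convex_Icc t0 S)
      (hψ.sub (by fun_prop)) (fun s hs ↦ ?_) (fun s hs ↦ ?_)
    all_goals rw [interior_Icc] at hs
    · exact (((hψ' s hs).sub (hderiv s)).congr_deriv (sub_neg_eq_add _ _)).hasDerivWithinAt
    · linarith [hψ'_ge s hs]
  have := hmono ht (right_mem_Icc.2 (ht.1.trans ht.2)) ht.2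
  have : 0 ≤ C / c * exp (-c * S) := by positivity
  linarith

theorem integral_le_of_le_add_integral {y : ℝ → ℝ} {t0 S k b C : ℝ} (hS : t0 ≤ S) (hkb : k < b)
    (hC : 0 ≤ C) (hy : ContinuousOn y (Icc t0 S))
    (hle : ∀ t ∈ Icc t0 S, y t ≤ C * exp (-b * t) + k * ∫ s in t..S, y s) :
    ∀ t ∈ Icc t0 S, ∫ s in t..S, y s ≤ C / (b - k) * exp (-b * t) := by
  set F : ℝ → ℝ := fun t ↦ ∫ s in t..S, y s
  have hF : ContinuousOn F (Icc t0 S) := by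
    rw [← uIcc_of_le hS] at hy ⊢
    exact intervalIntegral.continuousOn_primitive_interval_left (hy.integrableOn_compact isCompact_uIcc)
  have hF' : ∀ t ∈ Ioo t0 S, HasDerivAt F (-y t) t := fun t ht ↦
    intervalIntegral.integral_hasDerivAt_left
      ((hy.mono (Icc_subset_Icc ht.1.le le_rfl)).intervalIntegrable_of_Icc ht.2.le)
      ((hy.mono Ioo_subset_Icc_self).stronglyMeasurableAtFilter isOpen_Ioo t ht)
      (hy.continuousAt (Icc_mem_nhds ht.1 ht.2))
  have hexp (t : ℝ) : exp (k * t) * exp (-b * t) = exp (-(b - k) * t) := by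
    rw [← exp_add]; ring_nf
  have hψ := le_div_mul_exp_of_deriv_ge (ψ := fun t ↦ exp (k * t) * F t)
    (ψ' := fun t ↦ exp (k * t) * (k * F t - y t)) (sub_pos.2 hkb) hC
    (by fun_prop) (fun t ht ↦ ?_) (fun t ht ↦ ?_) (by simp [F])
  · intro t ht
    refine le_of_mul_le_mul_left ?_ (exp_pos (k * t))
    calc exp (k * t) * F t ≤ C / (b - k) * exp (-(b - k) * t) := hψ t ht
      _ = exp (k * t) * (C / (b - k) * exp (-b * t)) := by rw [← hexp]; ring
  · exact ((((hasDerivAt_id t).const_mul k).exp.mul (hF' t ht))).congr_deriv (by simp; ring)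
  · calc -(C * exp (-(b - k) * t)) = exp (k * t) * -(C * exp (-b * t)) := by rw [← hexp]; ring
      _ ≤ exp (k * t) * (k * F t - y t) := by
        gcongr
        linarith [hle t (Ioo_subset_Icc_self ht)]

theorem le_mul_exp_of_le_add_integral {y : ℝ → ℝ} {t0 S k b C : ℝ} (hS : t0 ≤ S) (hk : 0 ≤ k)
    (hkb : k < b) (hC : 0 ≤ C) (hy : ContinuousOn y (Icc t0 S))
    (hle : ∀ t ∈ Icc t0 S, y t ≤ C * exp (-b * t) + k * ∫ s in t..S, y s) :
    ∀ t ∈ Icc t0 S, y t ≤ C * b / (b - k) * exp (-b * t) := by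
  intro t ht
  have hbk : b - k ≠ 0 := (sub_pos.2 hkb).ne'
  calc y t ≤ C * exp (-b * t) + k * ∫ s in t..S, y s := hle t ht
    _ ≤ C * exp (-b * t) + k * (C / (b - k) * exp (-b * t)) := by
      gcongr
      exact integral_le_of_le_add_integral hS hkb hC hy hle t ht
    _ = C * b / (b - k) * exp (-b * t) := by field_simp; ring

theorem stmt2 (eβ C : ℝ) (heβ : 0 < eβ) (hC : 0 ≤ C) :
    ∃ C' ≥ 0, ∀ t0 S : ℝ, t0 ≤ S → ∀ y : ℝ → ℝ,
      ContinuousOn y (Icc t0 S) → (∀ t ∈ Icc t0 S, 0 ≤ y t) →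
      (∀ t ∈ Icc t0 S, y t ≤ C * Real.exp (-eβ * t) + eβ / 10 * ∫ s in t..S, y s) →
      ∀ t ∈ Icc t0 S, y t ≤ C' * Real.exp (-eβ * t) := by
  have hkb : eβ / 10 < eβ := by linarith
  refine ⟨C * eβ / (eβ - eβ / 10), div_nonneg (by positivity) (sub_pos.2 hkb).le, ?_⟩
  intro t0 S hS y hy _ hle
  exact le_mul_exp_of_le_add_integral hS (by positivity) hkb hC hy hle
end

section
/- Let $e_k, e_j, \sigma > 0$ with $e_k \le e_j$, let $C \ge 0$, $S \ge t_0$, and let $\alpha : [t_0, S] \to \mathbb{R}$ be $C^1$ satisfying $|\alpha'(t) + e_k\,\alpha(t)| \le C e^{-(e_j + 4\sigma)t}$ for all $t \in [t_0, S]$ and $|\alpha(S)| \le C e^{-(e_j + 4\sigma)S}$. Then there exists $C' \ge 0$ depending only on $C$, $e_k$, $e_j$, $\sigma$ such that $|\alpha(t)| \le C' e^{-(e_j + 4\sigma)t}$ for all $t \in [t_0, S]$. -/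
/-!
Multiplying by the integrating factor `exp (ek * t)` turns the equation into
`|(exp (ek * t) * α t)'| ≤ C * exp (-μ * t)` with `μ = ej + 4σ - ek > 0`. Comparing with the
primitive `-(C / μ) * exp (-μ * t)` of the bound backwards from `S`, the endpoint term
contributes at most `C * exp (-μ * t)` and the increment at most `C / μ * exp (-μ * t)`; dividing by the integrating factor again gives the claim with
`C' = C + C / μ`.
-/

open Real Set

theorem norm_image_sub_le_of_norm_deriv_le_deriv {E : Type*} [NormedAddCommGroup E]
    [NormedSpace ℝ E] {f f' : ℝ → E} {g g' : ℝ → ℝ} {a b : ℝ} (hab : a ≤ b)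
    (hf : ∀ x ∈ Icc a b, HasDerivAt f (f' x) x) (hg : ∀ x, HasDerivAt g (g' x) x)
    (bound : ∀ x ∈ Ico a b, ‖f' x‖ ≤ g' x) : ‖f b - f a‖ ≤ g b - g a :=
  image_norm_le_of_norm_deriv_right_le_deriv_boundary (f := fun x => f x - f a)
    (B := fun x => g x - g a)
    (fun x hx => (hf x hx).continuousAt.continuousWithinAt.sub continuousWithinAt_const)
    (fun x hx => ((hf x (Ico_subset_Icc_self hx)).sub_const (f a)).hasDerivWithinAt)
    (by simp) (fun x => (hg x).sub_const (g a)) bound (right_mem_Icc.2 hab)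

theorem abs_le_of_abs_deriv_add_mul_le {α α' : ℝ → ℝ} {k l C t S : ℝ} (hkl : k < l)
    (hC : 0 ≤ C) (htS : t ≤ S) (hα : ∀ s ∈ Icc t S, HasDerivAt α (α' s) s)
    (hode : ∀ s ∈ Icc t S, |α' s + k * α s| ≤ C * exp (-l * s))
    (hS : |α S| ≤ C * exp (-l * S)) :
    |α t| ≤ (C + C / (l - k)) * exp (-l * t) := by
  set μ := l - k
  have hμ : 0 < μ := sub_pos.2 hkl
  have hweight : ∀ s x, |x| ≤ C * exp (-l * s) → |exp (k * s) * x| ≤ C * exp (-μ * s) := by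
    intro s x hx
    calc |exp (k * s) * x| = exp (k * s) * |x| := by rw [abs_mul, abs_of_pos (exp_pos _)]
      _ ≤ exp (k * s) * (C * exp (-l * s)) := by gcongr
      _ = C * exp (-μ * s) := by rw [mul_left_comm, ← exp_add]; simp only [μ]; ring_nf
  have hexp : ∀ c s, HasDerivAt (fun s => exp (c * s)) (exp (c * s) * c) s :=
    fun c _ => (hasDerivAt_const_mul c).exp
  have hβ : ∀ s ∈ Icc t S, HasDerivAt (fun s => exp (k * s) * α s)
      (exp (k * s) * (α' s + k * α s)) s :=
    fun s hs => ((hexp k s).mul (hα s hs)).congr_deriv (by ring)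
  have hprimitive : ∀ s, HasDerivAt (fun s => -(C / μ) * exp (-μ * s)) (C * exp (-μ * s)) s :=
    fun s => ((hexp (-μ) s).const_mul (-(C / μ))).congr_deriv (by field_simp)
  have hincrement := norm_image_sub_le_of_norm_deriv_le_deriv htS hβ hprimitive
    (fun s hs => hweight s _ (hode s (Ico_subset_Icc_self hs)))
  have hdecay : exp (-μ * S) ≤ exp (-μ * t) := exp_le_exp.2 (by nlinarith)
  have hβt : |exp (k * t) * α t| ≤ (C + C / μ) * exp (-μ * t) := by
    rw [Real.norm_eq_abs] at hincrement
    have hβS := hweight S _ hS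
    have hCS := mul_le_mul_of_nonneg_left hdecay hC
    have hCμS : 0 ≤ C / μ * exp (-μ * S) := by positivity
    calc |exp (k * t) * α t|
        = |exp (k * S) * α S - (exp (k * S) * α S - exp (k * t) * α t)| := by ring_nf
      _ ≤ |exp (k * S) * α S| + |exp (k * S) * α S - exp (k * t) * α t| := abs_sub _ _
      _ ≤ (C + C / μ) * exp (-μ * t) := by linarith
  calc |α t| = exp (-(k * t)) * |exp (k * t) * α t| := by
        rw [abs_mul, abs_of_pos (exp_pos _), ← mul_assoc, ← exp_add, neg_add_cancel, exp_zero,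
          one_mul]
    _ ≤ exp (-(k * t)) * ((C + C / μ) * exp (-μ * t)) := by gcongr
    _ = (C + C / μ) * exp (-l * t) := by rw [mul_left_comm, ← exp_add]; simp only [μ]; ring_nf

theorem stmt8_general (C ek ej σ : ℝ) (hC : 0 ≤ C)
    (hkj : ek ≤ ej) (hσ : 0 < σ) :
    ∃ C' ≥ 0, ∀ t0 S : ℝ, t0 ≤ S → ∀ α α' : ℝ → ℝ,
      (∀ t ∈ Icc t0 S, HasDerivAt α (α' t) t) →
      ContinuousOn α' (Icc t0 S) →
      (∀ t ∈ Icc t0 S, |α' t + ek * α t| ≤ C * Real.exp (-(ej + 4 * σ) * t)) →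
      |α S| ≤ C * Real.exp (-(ej + 4 * σ) * S) →
      ∀ t ∈ Icc t0 S, |α t| ≤ C' * Real.exp (-(ej + 4 * σ) * t) := by
  have hkl : ek < ej + 4 * σ := by linarith
  refine ⟨C + C / (ej + 4 * σ - ek), by have := sub_pos.2 hkl; positivity, ?_⟩
  intro t0 S _ α α' hα _ hode hS t ht
  have hsub : Icc t S ⊆ Icc t0 S := Icc_subset_Icc_left ht.1
  exact abs_le_of_abs_deriv_add_mul_le hkl hC ht.2 (fun s hs => hα s (hsub hs))
    (fun s hs => hode s (hsub hs)) hS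

theorem stmt8 (C ek ej σ : ℝ) (hC : 0 ≤ C) (hek : 0 < ek) (hej : 0 < ej)
    (hkj : ek ≤ ej) (hσ : 0 < σ) :
    ∃ C' ≥ 0, ∀ t0 S : ℝ, t0 ≤ S → ∀ α α' : ℝ → ℝ,
      (∀ t ∈ Icc t0 S, HasDerivAt α (α' t) t) →
      ContinuousOn α' (Icc t0 S) →
      (∀ t ∈ Icc t0 S, |α' t + ek * α t| ≤ C * Real.exp (-(ej + 4 * σ) * t)) →
      |α S| ≤ C * Real.exp (-(ej + 4 * σ) * S) →
      ∀ t ∈ Icc t0 S, |α t| ≤ C' * Real.exp (-(ej + 4 * σ) * t) :=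
  stmt8_general C ek ej σ hC hkj hσ
end

section
/- Let $e_1 > 0$, $t_0 \in \mathbb{R}$, and let $\mathcal{A} : [t_0, \infty) \to [0, \infty)$ be $C^1$, bounded, with $\mathcal{A}(t) \to 0$ as $t \to \infty$. Suppose there exists $C \ge 0$ and a continuous integrable function $\xi : [t_0, \infty) \to [0, \infty)$ such that for all $t \ge t_0$: $|\mathcal{A}'(t) + 2e_1 \mathcal{A}(t)| \le C\,\xi(t)\, \sup_{t' \ge t} \mathcal{A}(t')$. Then there exists $c \ge 0$ such that $\mathcal{A}(t) \le c\, e^{-2 e_1 t}$ for all $t \ge t_0$. -/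
open Real Set MeasureTheory Filter

/-!
Put `u t = A t * exp (k t)`. The one-sided bound gives `u' ≤ C ξ(t) e^{kt} sup_{[t,∞)} A`, so once
`C ∫_s^∞ ξ ≤ 1/4`, `u` can grow on any `[a, b] ⊆ [s, ∞)` by at most a quarter of a bound for
`e^{kτ} sup_{[τ,∞)} A` on `[a, b]`. Used on `[T, r]` with `r` ranging over `[T, ∞)`, this gives
`sup_{[T,∞)} A ≤ 4/3 A(T)`; used at a running maximum `b` of `u`, it then gives
`u b ≤ u s + u b / 3`, so `u ≤ 3/2 u(s)` on `[s, ∞)`. On `[t0, s]` boundedness of `A` suffices.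
-/

theorem tendsto_setIntegral_Ici_atTop {f : ℝ → ℝ} {a : ℝ} (hf : IntegrableOn f (Ici a)) :
    Tendsto (fun s => ∫ x in Ici s, f x) atTop (nhds 0) := by
  have hempty : ⋂ s : ℝ, Ici s = ∅ := by
    rw [← not_nonempty_iff_eq_empty, nonempty_iInter_Ici_iff, range_id']
    exact not_bddAbove_univ
  simpa [hempty] using
    tendsto_setIntegral_of_antitone (fun _ => measurableSet_Ici) antitone_Ici ⟨a, hf⟩

theorem intervalIntegral_le_setIntegral_Ici {f : ℝ → ℝ} {s a b : ℝ} (hsa : s ≤ a) (hab : a ≤ b)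
    (hf : IntegrableOn f (Ici s)) (hf0 : ∀ x ∈ Ici s, 0 ≤ f x) :
    ∫ x in a..b, f x ≤ ∫ x in Ici s, f x := by
  rw [intervalIntegral.integral_of_le hab]
  exact setIntegral_mono_set hf ((ae_restrict_iff' measurableSet_Ici).2 (.of_forall hf0))
    (LE.le.eventuallyLE fun x hx => hsa.trans hx.1.le)

theorem mul_exp_sub_le {A A' ξ M : ℝ → ℝ} {k C K a b : ℝ} (hab : a ≤ b) (hC : 0 ≤ C)
    (hd : ∀ t ∈ Icc a b, HasDerivAt A (A' t) t)
    (hξ : IntegrableOn ξ (Icc a b)) (hξ0 : ∀ t ∈ Icc a b, 0 ≤ ξ t)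
    (hA' : ∀ t ∈ Icc a b, A' t + k * A t ≤ C * ξ t * M t)
    (hMK : ∀ t ∈ Icc a b, M t * exp (k * t) ≤ K) :
    A b * exp (k * b) - A a * exp (k * a) ≤ C * K * ∫ t in a..b, ξ t := by
  have hdu : ∀ t ∈ Icc a b,
      HasDerivAt (fun t => A t * exp (k * t)) ((A' t + k * A t) * exp (k * t)) t := by
    intro t ht
    have hexp : HasDerivAt (fun t => exp (k * t)) (exp (k * t) * k) t := by
      simpa using ((hasDerivAt_id t).const_mul k).exp
    exact ((hd t ht).mul hexp).congr_deriv (by ring)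
  rw [← intervalIntegral.integral_const_mul]
  refine intervalIntegral.sub_le_integral_of_hasDeriv_right_of_le hab
    (fun t ht => (hdu t ht).continuousAt.continuousWithinAt)
    (fun t ht => (hdu t (Ioo_subset_Icc_self ht)).hasDerivWithinAt) (hξ.const_mul _)
    fun t ht => ?_
  have ht := Ioo_subset_Icc_self ht
  calc (A' t + k * A t) * exp (k * t) ≤ C * ξ t * M t * exp (k * t) :=
        mul_le_mul_of_nonneg_right (hA' t ht) (exp_nonneg _)
    _ = C * ξ t * (M t * exp (k * t)) := by ring
    _ ≤ C * ξ t * K := mul_le_mul_of_nonneg_left (hMK t ht) (mul_nonneg hC (hξ0 t ht))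
    _ = C * K * ξ t := by ring

theorem sSup_image_Ici_le_of_mul_exp_le {A : ℝ → ℝ} {k T : ℝ} (hk : 0 ≤ k) (hAT : 0 ≤ A T)
    (hinc : ∀ r ≥ T,
      A r * exp (k * r) ≤ A T * exp (k * T) + sSup (A '' Ici T) * exp (k * r) / 4) :
    sSup (A '' Ici T) ≤ 4 / 3 * A T := by
  set S := sSup (A '' Ici T)
  have hle : ∀ r ≥ T, A r ≤ A T + S / 4 := by
    intro r hr
    have hexp : exp (k * T) ≤ exp (k * r) := exp_le_exp.2 (mul_le_mul_of_nonneg_left hr hk)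
    refine le_of_mul_le_mul_right ?_ (exp_pos (k * r))
    calc A r * exp (k * r) ≤ A T * exp (k * T) + S * exp (k * r) / 4 := hinc r hr
      _ ≤ A T * exp (k * r) + S * exp (k * r) / 4 := by gcongr
      _ = (A T + S / 4) * exp (k * r) := by ring
  have : S ≤ A T + S / 4 :=
    csSup_le (nonempty_Ici.image A) (by rintro _ ⟨r, hr, rfl⟩; exact hle r hr)
  linarith

theorem le_of_forall_isMaxOn_Icc_le {u : ℝ → ℝ} {s t M : ℝ} (hst : s ≤ t)
    (hu : ContinuousOn u (Icc s t)) (hmax : ∀ b ∈ Icc s t, IsMaxOn u (Icc s b) b → u b ≤ M) :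
    u t ≤ M := by
  obtain ⟨m, hm, hm_max⟩ := isCompact_Icc.exists_isMaxOn (nonempty_Icc.2 hst) hu
  exact (hm_max ⟨hst, le_rfl⟩).trans (hmax m hm fun τ hτ => hm_max ⟨hτ.1, hτ.2.trans hm.2⟩)

theorem mul_exp_le_add_quarter {A A' ξ M : ℝ → ℝ} {k C s a b K : ℝ} (hC : 0 ≤ C)
    (hd : ∀ t ∈ Ici s, HasDerivAt A (A' t) t) (hξ : IntegrableOn ξ (Ici s))
    (hξ0 : ∀ t ∈ Ici s, 0 ≤ ξ t) (hsmall : C * ∫ t in Ici s, ξ t ≤ 1 / 4)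
    (hA' : ∀ t ∈ Ici s, A' t + k * A t ≤ C * ξ t * M t)
    (hsa : s ≤ a) (hab : a ≤ b) (hK : 0 ≤ K) (hMK : ∀ t ∈ Icc a b, M t * exp (k * t) ≤ K) :
    A b * exp (k * b) ≤ A a * exp (k * a) + K / 4 := by
  have hIcc : Icc a b ⊆ Ici s := fun t ht => hsa.trans ht.1
  have hdiff := mul_exp_sub_le hab hC (fun t ht => hd t (hIcc ht)) (hξ.mono_set hIcc)
    (fun t ht => hξ0 t (hIcc ht)) (fun t ht => hA' t (hIcc ht)) hMK
  have hint := intervalIntegral_le_setIntegral_Ici hsa hab hξ hξ0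
  have : C * K * ∫ t in a..b, ξ t ≤ K / 4 :=
    calc C * K * ∫ t in a..b, ξ t = K * (C * ∫ t in a..b, ξ t) := by ring
      _ ≤ K * (C * ∫ t in Ici s, ξ t) := by gcongr
      _ ≤ K * (1 / 4) := by gcongr
      _ = K / 4 := by ring
  linarith

theorem mul_exp_le_of_setIntegral_le_quarter {A A' ξ : ℝ → ℝ} {k C s t : ℝ} (hk : 0 ≤ k)
    (hC : 0 ≤ C) (hd : ∀ t ∈ Ici s, HasDerivAt A (A' t) t) (hA0 : ∀ t ∈ Ici s, 0 ≤ A t)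
    (hbdd : BddAbove (A '' Ici s)) (hξ : IntegrableOn ξ (Ici s)) (hξ0 : ∀ t ∈ Ici s, 0 ≤ ξ t)
    (hsmall : C * ∫ t in Ici s, ξ t ≤ 1 / 4)
    (hA' : ∀ t ∈ Ici s, A' t + k * A t ≤ C * ξ t * sSup (A '' Ici t)) (hst : s ≤ t) :
    A t * exp (k * t) ≤ 3 / 2 * (A s * exp (k * s)) := by
  set S : ℝ → ℝ := fun t => sSup (A '' Ici t)
  have hbddT : ∀ T ≥ s, BddAbove (A '' Ici T) := fun T hT =>
    hbdd.mono (image_mono (Ici_subset_Ici.2 hT))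
  have hS0 : ∀ T ≥ s, 0 ≤ S T := fun T hT =>
    (hA0 T hT).trans (le_csSup (hbddT T hT) (mem_image_of_mem A self_mem_Ici))
  have hinc {a b K : ℝ} := mul_exp_le_add_quarter (a := a) (b := b) (K := K) (M := S)
    hC hd hξ hξ0 hsmall hA'
  have hS : ∀ T ≥ s, S T ≤ 4 / 3 * A T := fun T hT =>
    sSup_image_Ici_le_of_mul_exp_le hk (hA0 T hT) fun r hr =>
      hinc hT hr (mul_nonneg (hS0 T hT) (exp_nonneg _)) fun τ hτ =>
        mul_le_mul (csSup_le_csSup (hbddT T hT) (nonempty_Ici.image A)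
            (image_mono (Ici_subset_Ici.2 hτ.1)))
          (exp_le_exp.2 (mul_le_mul_of_nonneg_left hτ.2 hk)) (exp_nonneg _) (hS0 T hT)
  refine le_of_forall_isMaxOn_Icc_le (u := fun t => A t * exp (k * t)) hst
    (continuousOn_of_forall_continuousAt fun x hx => (hd x hx.1).continuousAt.mul
      (by fun_prop : Continuous fun t => exp (k * t)).continuousAt) fun b hb hb_max => ?_
  have hAb := hA0 b hb.1
  have := hinc (K := 4 / 3 * (A b * exp (k * b))) le_rfl hb.1 (by positivity) fun τ hτ =>
    calc S τ * exp (k * τ) ≤ 4 / 3 * A τ * exp (k * τ) := by gcongr; exact hS τ hτ.1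
      _ = 4 / 3 * (A τ * exp (k * τ)) := by ring
      _ ≤ 4 / 3 * (A b * exp (k * b)) := mul_le_mul_of_nonneg_left (hb_max hτ) (by norm_num)
  linarith

theorem exists_le_mul_exp_neg_of_deriv_add_le {A A' ξ : ℝ → ℝ} {k C t0 : ℝ} (hk : 0 ≤ k)
    (hC : 0 ≤ C) (hd : ∀ t ∈ Ici t0, HasDerivAt A (A' t) t) (hA0 : ∀ t ∈ Ici t0, 0 ≤ A t)
    (hbdd : BddAbove (A '' Ici t0)) (hξ : IntegrableOn ξ (Ici t0))
    (hξ0 : ∀ t ∈ Ici t0, 0 ≤ ξ t)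
    (hA' : ∀ t ∈ Ici t0, A' t + k * A t ≤ C * ξ t * sSup (A '' Ici t)) :
    ∃ c ≥ 0, ∀ t ∈ Ici t0, A t ≤ c * exp (-k * t) := by
  obtain ⟨s, hsmall, hs⟩ : ∃ s, C * ∫ t in Ici s, ξ t ≤ 1 / 4 ∧ t0 ≤ s := by
    have := (tendsto_setIntegral_Ici_atTop hξ).const_mul C
    rw [mul_zero] at this
    exact ((this.eventually_le_const (by norm_num)).and (eventually_ge_atTop t0)).exists
  have hsub : Ici s ⊆ Ici t0 := Ici_subset_Ici.2 hs
  have hB : ∀ t ∈ Ici t0, A t ≤ sSup (A '' Ici t0) := fun t ht =>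
    le_csSup hbdd (mem_image_of_mem A ht)
  have hB0 : 0 ≤ sSup (A '' Ici t0) := (hA0 t0 self_mem_Ici).trans (hB t0 self_mem_Ici)
  refine ⟨max (3 / 2 * (A s * exp (k * s))) (sSup (A '' Ici t0) * exp (k * s)),
    le_max_of_le_right (mul_nonneg hB0 (exp_nonneg _)), fun t ht => ?_⟩
  rw [neg_mul, exp_neg, ← div_eq_mul_inv, le_div_iff₀ (exp_pos _)]
  rcases le_total s t with hst | hts
  · exact le_max_of_le_left (mul_exp_le_of_setIntegral_le_quarter hk hC
      (fun t ht => hd t (hsub ht)) (fun t ht => hA0 t (hsub ht))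
      (hbdd.mono (image_mono hsub)) (hξ.mono_set hsub) (fun t ht => hξ0 t (hsub ht)) hsmall
      (fun t ht => hA' t (hsub ht)) hst)
  · exact le_max_of_le_right (mul_le_mul (hB t ht)
      (exp_le_exp.2 (mul_le_mul_of_nonneg_left hts hk)) (exp_nonneg _) hB0)

theorem stmt19_general (e1 t0 : ℝ) (he1 : 0 < e1) (A A' ξ : ℝ → ℝ) (C : ℝ) (hC : 0 ≤ C)
    (hd : ∀ t ∈ Ici t0, HasDerivAt A (A' t) t)
    (hA0 : ∀ t ∈ Ici t0, 0 ≤ A t) (hbdd : BddAbove (A '' Ici t0))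
    (hξ0 : ∀ t ∈ Ici t0, 0 ≤ ξ t)
    (hξint : IntegrableOn ξ (Ici t0))
    (h : ∀ t ∈ Ici t0, |A' t + 2 * e1 * A t| ≤ C * ξ t * sSup (A '' Ici t)) :
    ∃ c ≥ 0, ∀ t ∈ Ici t0, A t ≤ c * Real.exp (-(2 * e1) * t) :=
  exists_le_mul_exp_neg_of_deriv_add_le (by positivity) hC hd hA0 hbdd hξint hξ0 fun t ht =>
    (le_abs_self _).trans (h t ht)

theorem stmt19 (e1 t0 : ℝ) (he1 : 0 < e1) (A A' ξ : ℝ → ℝ) (C : ℝ) (hC : 0 ≤ C)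
    (hd : ∀ t ∈ Ici t0, HasDerivAt A (A' t) t) (hA'c : ContinuousOn A' (Ici t0))
    (hA0 : ∀ t ∈ Ici t0, 0 ≤ A t) (hbdd : BddAbove (A '' Ici t0))
    (hlim : Tendsto A atTop (nhds 0))
    (hξc : ContinuousOn ξ (Ici t0)) (hξ0 : ∀ t ∈ Ici t0, 0 ≤ ξ t)
    (hξint : IntegrableOn ξ (Ici t0))
    (h : ∀ t ∈ Ici t0, |A' t + 2 * e1 * A t| ≤ C * ξ t * sSup (A '' Ici t)) :
    ∃ c ≥ 0, ∀ t ∈ Ici t0, A t ≤ c * Real.exp (-(2 * e1) * t) :=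
  stmt19_general e1 t0 he1 A A' ξ C hC hd hA0 hbdd hξ0 hξint h
end
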